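/- Right invariance of the dual integral ψ̂ defined by ψ̂(φ(·a)) = ε(a): if a, a' ∈ A and c₁, …, cₙ, d₁, …, dₙ ∈ A satisfy Σ φ(x·y₍₁₎·a)·φ(y₍₂₎·a') = Σᵢ φ(x·cᵢ)·φ(y·dᵢ) for all x, y ∈ A, then Σᵢ ε(cᵢ)·φ(y·dᵢ) = ε(a)·φ(y·a') for all y ∈ A. (This expresses (ψ̂ ⊗ id)(Δ̂(b)(1 ⊗ b')) = ψ̂(b)·b' for b = φ(·a), b' = φ(·a') in the dual = {φ(·a) : a ∈ A}.) -/

import Mathlib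

/-!
Write `s = Σ y₍₁₎ φ(y₍₂₎ a')`. The hypothesis says `φ(x · s a) = φ(x · Σᵢ φ(y dᵢ) cᵢ)` for every `x`,
so faithfulness of `φ` gives `s a = Σᵢ φ(y dᵢ) cᵢ`. Applying the multiplicative counit and using
`ε(s) = φ(y a')` (counit axiom) yields the claim.
-/

open TensorProduct HopfAlgebra

theorem TensorProduct.lid_map_eq_apply_rid_lTensor {R M N : Type*} [CommSemiring R]
    [AddCommMonoid M] [Module R M] [AddCommMonoid N] [Module R N]
    (ψ : M →ₗ[R] R) (f : N →ₗ[R] R) (t : M ⊗[R] N) :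
    TensorProduct.lid R R (map ψ f t) = ψ (TensorProduct.rid R M (f.lTensor M t)) := by
  induction t using TensorProduct.induction_on with
  | zero => simp
  | tmul m n => simp [mul_comm]
  | add s t hs ht => simp only [map_add, hs, ht]

theorem Coalgebra.counit_rid_lTensor_comul {R A : Type*} [CommSemiring R] [AddCommMonoid A]
    [Module R A] [Coalgebra R A] (f : A →ₗ[R] R) (y : A) :
    counit (R := R) (_root_.TensorProduct.rid R A (f.lTensor A (comul y))) = f y := by
  rw [← TensorProduct.lid_map_eq_apply_rid_lTensor, ← LinearMap.lTensor_comp_rTensor,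
    LinearMap.comp_apply, rTensor_counit_comul]
  simp

theorem dual_integral_right_invariance
    {A : Type*} [Ring A] [HopfAlgebra ℂ A]
    (φ : A →ₗ[ℂ] ℂ)
    (hφf2 : ∀ a : A, (∀ b : A, φ (b * a) = 0) → a = 0)
    (a a' : A) (n : ℕ) (c d : Fin n → A)
    (h : ∀ x y : A,
      (TensorProduct.lid ℂ ℂ)
          (TensorProduct.map (φ ∘ₗ LinearMap.mulRight ℂ a ∘ₗ LinearMap.mulLeft ℂ x)
            (φ ∘ₗ LinearMap.mulRight ℂ a') (Coalgebra.comul (R := ℂ) y)) =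
        ∑ i, φ (x * c i) * φ (y * d i)) :
    ∀ y : A,
      ∑ i, Coalgebra.counit (R := ℂ) (c i) * φ (y * d i) =
        Coalgebra.counit (R := ℂ) a * φ (y * a') := by
  intro y
  have hsa : TensorProduct.rid ℂ A ((φ ∘ₗ LinearMap.mulRight ℂ a').lTensor A (Coalgebra.comul y)) * a
      = ∑ i, φ (y * d i) • c i := by
    refine sub_eq_zero.mp (hφf2 _ fun x => ?_)
    have hx := h x y
    rw [TensorProduct.lid_map_eq_apply_rid_lTensor] at hx
    simp only [LinearMap.comp_apply, LinearMap.mulLeft_apply, LinearMap.mulRight_apply] at hx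
    rw [mul_sub, map_sub, ← mul_assoc, hx, Finset.mul_sum, map_sum, ← Finset.sum_sub_distrib]
    refine Finset.sum_eq_zero fun i _ => ?_
    rw [mul_smul_comm, map_smul, smul_eq_mul, mul_comm, sub_self]
  have hε := congrArg (Coalgebra.counit (R := ℂ)) hsa
  rw [Bialgebra.counit_mul, Coalgebra.counit_rid_lTensor_comul] at hε
  simp only [map_sum, map_smul, smul_eq_mul, LinearMap.comp_apply, LinearMap.mulRight_apply] at hε
  rw [mul_comm (Coalgebra.counit a), hε]
  exact Finset.sum_congr rfl fun i _ => mul_comm _ _
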